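/- arXiv:2305.03878 — 13 statements merged into one kernel-verified Lean document; each statement's English description precedes it below -/
import Mathlib

section
/- For ideals γ₁ and γ₂ of a commutative ring A, if γ₁ is strongly n-absorbing and γ₂ is strongly m-absorbing, then γ₁ ∩ γ₂ is strongly (n+m)-absorbing. -/
/-!
Strong `n`-absorption lets one discard factors of a product in `α` until at most `n` remain:
grouping `k > n` factors into `n + 1` nonempty blocks, one block can be dropped. Given `n + m + 1`
factors with product in `γ₁ ⊓ γ₂`, at most `n` of them already land in `γ₁` and at most `m` in
`γ₂`, so some factor is needed for neither.
-/

def IsStronglyAbsorbing {A : Type*} [CommRing A] (α : Ideal A) (n : ℕ) : Prop :=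
  ∀ γ : Fin (n + 1) → Ideal A, (∏ i, γ i) ≤ α →
    ∃ j, (∏ i ∈ Finset.univ.erase j, γ i) ≤ α

namespace IsStronglyAbsorbing

variable {A : Type*} [CommRing A] {α : Ideal A} {n : ℕ} {ι : Type*}

theorem exists_ssubset_prod_le (h : IsStronglyAbsorbing α n) {s : Finset ι} (hs : n < s.card)
    {γ : ι → Ideal A} (hγ : ∏ i ∈ s, γ i ≤ α) : ∃ t ⊂ s, ∏ i ∈ t, γ i ≤ α := by
  obtain ⟨g⟩ := Function.Embedding.nonempty_of_card_le (α := Fin (n + 1)) (β := s) (by simpa)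
  -- `block` sends the `j`-th of `n + 1` chosen elements of `s` to `j`; its fibres group the factors.
  set block : ι → Fin (n + 1) := Function.invFun fun j => (g j : ι)
  have block_g : ∀ j, block (g j) = j :=
    Function.leftInverse_invFun (Subtype.val_injective.comp g.injective)
  obtain ⟨j, hj⟩ := h (fun j => ∏ i ∈ s with block i = j, γ i) (by rwa [Finset.prod_fiberwise])
  rw [Finset.prod_fiberwise_eq_prod_filter] at hj
  exact ⟨_, Finset.filter_ssubset.2 ⟨g j, (g j).2, by simp [block_g]⟩, hj⟩

theorem exists_subset_card_le_prod_le (h : IsStronglyAbsorbing α n) (s : Finset ι)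
    {γ : ι → Ideal A} (hγ : ∏ i ∈ s, γ i ≤ α) : ∃ t ⊆ s, t.card ≤ n ∧ ∏ i ∈ t, γ i ≤ α := by
  induction s using Finset.strongInduction with
  | H s ih =>
    by_cases hs : s.card ≤ n
    · exact ⟨s, subset_rfl, hs, hγ⟩
    obtain ⟨t, hts, ht⟩ := h.exists_ssubset_prod_le (not_le.1 hs) hγ
    obtain ⟨u, hut, hu⟩ := ih t hts ht
    exact ⟨u, hut.trans hts.subset, hu⟩

end IsStronglyAbsorbing

theorem inf_strongly_absorbing {A : Type*} [CommRing A] (γ₁ γ₂ : Ideal A) (n m : ℕ)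
    (h₁ : IsStronglyAbsorbing γ₁ n) (h₂ : IsStronglyAbsorbing γ₂ m) :
    IsStronglyAbsorbing (γ₁ ⊓ γ₂) (n + m) := by
  intro γ hγ
  obtain ⟨t₁, -, ht₁, hγ₁⟩ := h₁.exists_subset_card_le_prod_le Finset.univ (hγ.trans inf_le_left)
  obtain ⟨t₂, -, ht₂, hγ₂⟩ := h₂.exists_subset_card_le_prod_le Finset.univ (hγ.trans inf_le_right)
  obtain ⟨j, -, hj⟩ := Finset.exists_mem_notMem_of_card_lt_card (s := t₁ ∪ t₂) (t := .univ) <| by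
    grw [Finset.card_union_le, ht₁, ht₂, Finset.card_univ, Fintype.card_fin]
    omega
  have prod_erase_le {t : Finset (Fin (n + m + 1))} (ht : j ∉ t) :
      ∏ i ∈ Finset.univ.erase j, γ i ≤ ∏ i ∈ t, γ i :=
    Finset.prod_le_prod_of_subset_of_le_one'
      (fun i hi => Finset.mem_erase.2 ⟨ne_of_mem_of_not_mem hi ht, Finset.mem_univ i⟩)
      fun i _ _ => Ideal.one_eq_top (R := A) ▸ le_top
  rw [Finset.mem_union, not_or] at hj
  exact ⟨j, le_inf ((prod_erase_le hj.1).trans hγ₁) ((prod_erase_le hj.2).trans hγ₂)⟩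
end

section
/- An ideal α of a commutative ring A is strongly n-absorbing if and only if for every list of n+1 finitely generated ideals γ₁,...,γ_{n+1} of A with γ₁⋯γ_{n+1} ⊆ α, there exists j such that ∏_{i≠j} γ_i ⊆ α. -/
namespace Ideal

variable {R ι : Type*} [CommSemiring R]

theorem exists_fg_le_and_mem_prod [DecidableEq ι] {s : Finset ι} {γ : ι → Ideal R} {t : R}
    (ht : t ∈ ∏ i ∈ s, γ i) :
    ∃ δ : ι → Ideal R, (∀ i, (δ i).FG) ∧ δ ≤ γ ∧ t ∈ ∏ i ∈ s, δ i := by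
  induction s using Finset.induction_on generalizing t with
  | empty =>
    exact ⟨⊥, fun _ => Submodule.fg_bot, bot_le, by simpa only [Finset.prod_empty] using ht⟩
  | @insert a s ha ih =>
    rw [Finset.prod_insert ha] at ht
    refine Submodule.mul_induction_on ht (fun x hx y hy => ?_) ?_
    · obtain ⟨δ, hδ_fg, hδ_le, hy⟩ := ih hy
      refine ⟨Function.update δ a (span {x}), ?_, ?_, ?_⟩
      · exact (Function.forall_update_iff δ fun _ I => I.FG).2
          ⟨Submodule.fg_span_singleton x, fun i _ => hδ_fg i⟩
      · exact (Function.forall_update_iff δ fun i I => I ≤ γ i).2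
          ⟨(span_singleton_le_iff_mem _).2 hx, fun i _ => hδ_le i⟩
      · rw [Finset.prod_insert ha, Function.update_self, Finset.prod_update_of_notMem ha]
        exact Submodule.mul_mem_mul (mem_span_singleton_self x) hy
    · rintro _ _ ⟨δ₁, hfg₁, hle₁, hmem₁⟩ ⟨δ₂, hfg₂, hle₂, hmem₂⟩
      refine ⟨δ₁ ⊔ δ₂, fun i => Submodule.FG.sup (hfg₁ i) (hfg₂ i), sup_le hle₁ hle₂,
        add_mem ?_ ?_⟩
      · exact (Finset.prod_le_prod' fun i _ => le_sup_left (b := δ₂ i)) hmem₁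
      · exact (Finset.prod_le_prod' fun i _ => le_sup_right (a := δ₁ i)) hmem₂

theorem exists_fg_le_and_prod_not_le {s : Finset ι} {γ : ι → Ideal R} {α : Ideal R}
    (h : ¬ (∏ i ∈ s, γ i) ≤ α) :
    ∃ δ : ι → Ideal R, (∀ i, (δ i).FG) ∧ δ ≤ γ ∧ ¬ (∏ i ∈ s, δ i) ≤ α := by
  classical
  obtain ⟨t, ht, htα⟩ := SetLike.not_le_iff_exists.1 h
  obtain ⟨δ, hδ_fg, hδ_le, hδ⟩ := exists_fg_le_and_mem_prod ht
  exact ⟨δ, hδ_fg, hδ_le, fun hle => htα (hle hδ)⟩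

end Ideal

theorem stronglyAbsorbing_iff_fg {A : Type*} [CommRing A] (α : Ideal A) (n : ℕ) :
    IsStronglyAbsorbing α n ↔
      ∀ γ : Fin (n + 1) → Ideal A, (∀ i, (γ i).FG) → (∏ i, γ i) ≤ α →
        ∃ j, (∏ i ∈ Finset.univ.erase j, γ i) ≤ α := by
  refine ⟨fun h γ _ => h γ, fun h γ hγ => ?_⟩
  by_contra! hne
  choose δ hδ_fg hδ_le hδ using fun j => Ideal.exists_fg_le_and_prod_not_le (hne j)
  let Δ : Fin (n + 1) → Ideal A := ⨆ j, δ j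
  have hΔ_fg : ∀ i, (Δ i).FG := fun i => by
    rw [show Δ i = ⨆ j, δ j i from iSup_apply]
    exact Submodule.fg_iSup _ fun j => hδ_fg j i
  have hΔ_le : Δ ≤ γ := iSup_le hδ_le
  obtain ⟨j, hj⟩ := h Δ hΔ_fg ((Finset.prod_le_prod' fun i _ => hΔ_le i).trans hγ)
  exact hδ j ((Finset.prod_le_prod' fun i _ => le_iSup δ j i).trans hj)
end

section
/- If B is a subring of a commutative ring A and α is a strongly n-absorbing ideal of A, then α ∩ B is a strongly n-absorbing ideal of B. -/
theorem IsStronglyAbsorbing.comap {R S : Type*} [CommRing R] [CommRing S] (f : R →+* S)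
    {α : Ideal S} {n : ℕ} (h : IsStronglyAbsorbing α n) :
    IsStronglyAbsorbing (α.comap f) n := by
  have map_prod_le_iff (s : Finset (Fin (n + 1))) (γ : Fin (n + 1) → Ideal R) :
      (∏ i ∈ s, (γ i).map f) ≤ α ↔ (∏ i ∈ s, γ i) ≤ α.comap f := by
    rw [← Ideal.map_le_iff_le_comap, ← Ideal.mapHom_apply, map_prod]
    rfl
  intro γ hγ
  obtain ⟨j, hj⟩ := h (fun i ↦ (γ i).map f) ((map_prod_le_iff _ γ).mpr hγ)
  exact ⟨j, (map_prod_le_iff _ γ).mp hj⟩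

theorem stronglyAbsorbing_comap_subring {A : Type*} [CommRing A] (B : Subring A)
    (α : Ideal A) (n : ℕ) (h : IsStronglyAbsorbing α n) :
    IsStronglyAbsorbing (α.comap B.subtype) n :=
  h.comap B.subtype
end

section
/- Every ideal α of a commutative Noetherian ring A is strongly n-absorbing for some positive integer n. -/
namespace Ideal

section CommSemiring

variable {A : Type*} [CommSemiring A]

def AbsorbsSubproducts (I : Ideal A) (n : ℕ) : Prop :=
  ∀ ⦃ι : Type⦄ (s : Finset ι) (γ : ι → Ideal A),
    ∏ i ∈ s, γ i ≤ I → ∃ t ⊆ s, t.card ≤ n ∧ ∏ i ∈ t, γ i ≤ I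

theorem prod_le_prod_of_subset {ι : Type*} {s t : Finset ι} (h : t ⊆ s) (γ : ι → Ideal A) :
    ∏ i ∈ s, γ i ≤ ∏ i ∈ t, γ i :=
  Finset.prod_le_prod_of_subset_of_le_one' h fun _ _ _ => one_eq_top (R := A) ▸ le_top

theorem AbsorbsSubproducts.mono {I : Ideal A} {m n : ℕ} (hI : I.AbsorbsSubproducts m)
    (hmn : m ≤ n) : I.AbsorbsSubproducts n := fun _ s γ hs =>
  let ⟨t, hts, htm, ht⟩ := hI s γ hs
  ⟨t, hts, htm.trans hmn, ht⟩

theorem absorbsSubproducts_top : (⊤ : Ideal A).AbsorbsSubproducts 0 := fun _ _ _ _ =>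
  ⟨∅, Finset.empty_subset _, le_rfl, le_top⟩

theorem AbsorbsSubproducts.inf {I J : Ideal A} {m n : ℕ} (hI : I.AbsorbsSubproducts m)
    (hJ : J.AbsorbsSubproducts n) : (I ⊓ J).AbsorbsSubproducts (m + n) := by
  classical
  intro ι s γ hs
  obtain ⟨t, hts, htm, ht⟩ := hI s γ (hs.trans inf_le_left)
  obtain ⟨u, hus, hun, hu⟩ := hJ s γ (hs.trans inf_le_right)
  refine ⟨t ∪ u, Finset.union_subset hts hus, (Finset.card_union_le t u).trans (by omega), ?_⟩
  exact le_inf ((prod_le_prod_of_subset Finset.subset_union_left γ).trans ht)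
    ((prod_le_prod_of_subset Finset.subset_union_right γ).trans hu)

theorem exists_absorbsSubproducts_finsetInf (s : Finset (Ideal A))
    (hs : ∀ J ∈ s, ∃ n, J.AbsorbsSubproducts n) : ∃ n, (s.inf id).AbsorbsSubproducts n := by
  classical
  induction s using Finset.induction_on with
  | empty => exact ⟨0, absorbsSubproducts_top⟩
  | insert J s _ ih =>
    obtain ⟨m, hm⟩ := hs J (Finset.mem_insert_self J s)
    obtain ⟨n, hn⟩ := ih fun K hK => hs K (Finset.mem_insert_of_mem hK)
    rw [Finset.inf_insert]
    exact ⟨m + n, hm.inf hn⟩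

theorem IsPrimary.le_of_mul_le {q I J : Ideal A} (hq : q.IsPrimary) (h : I * J ≤ q)
    (hJ : ¬J ≤ q.radical) : I ≤ q := by
  obtain ⟨y, hyJ, hy⟩ := Set.not_subset.mp hJ
  intro x hx
  exact ((isPrimary_iff.mp hq).2 (h (mul_mem_mul hx hyJ))).resolve_right hy

theorem IsPrimary.absorbsSubproducts {q : Ideal A} (hq : q.IsPrimary) {n : ℕ}
    (hn : q.radical ^ n ≤ q) : q.AbsorbsSubproducts n := by
  classical
  intro ι s γ hs
  set small := s.filter fun i => γ i ≤ q.radical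
  have hlarge : ¬∏ i ∈ s.filter (fun i => ¬γ i ≤ q.radical), γ i ≤ q.radical := by
    rw [(isPrime_radical hq).prod_le]
    rintro ⟨i, hi, hiq⟩
    exact (Finset.mem_filter.mp hi).2 hiq
  have hsmall : ∏ i ∈ small, γ i ≤ q :=
    hq.le_of_mul_le ((Finset.prod_filter_mul_prod_filter_not s _ γ).trans_le hs) hlarge
  by_cases hcard : small.card ≤ n
  · exact ⟨small, Finset.filter_subset _ s, hcard, hsmall⟩
  · obtain ⟨t, hts, htn⟩ := Finset.exists_subset_card_eq (not_le.mp hcard).le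
    refine ⟨t, hts.trans (Finset.filter_subset _ s), htn.le, le_trans ?_ hn⟩
    rw [← htn]
    exact Finset.prod_le_pow_card t γ _ fun i hi => (Finset.mem_filter.mp (hts hi)).2

end CommSemiring

section CommRing

variable {A : Type*} [CommRing A]

theorem exists_absorbsSubproducts [IsNoetherianRing A] (I : Ideal A) :
    ∃ n, I.AbsorbsSubproducts n := by
  obtain ⟨s, rfl, hprimary⟩ := Submodule.isLasker A A I
  refine exists_absorbsSubproducts_finsetInf s fun q hq => ?_
  obtain ⟨n, hn⟩ := q.exists_radical_pow_le_of_fg (IsNoetherian.noetherian _)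
  exact ⟨n, IsPrimary.absorbsSubproducts (hprimary hq) hn⟩

theorem AbsorbsSubproducts.isStronglyAbsorbing {I : Ideal A} {n : ℕ}
    (hI : I.AbsorbsSubproducts n) : IsStronglyAbsorbing I n := by
  classical
  intro γ hγ
  obtain ⟨t, -, htn, ht⟩ := hI Finset.univ γ hγ
  have hproper : t ≠ Finset.univ := fun h => by
    simp only [h, Finset.card_univ, Fintype.card_fin] at htn
    omega
  obtain ⟨j, hj⟩ := Finset.exists_of_ssubset (Finset.ssubset_univ_iff.mpr hproper)
  refine ⟨j, (prod_le_prod_of_subset ?_ γ).trans ht⟩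
  intro i hi
  exact Finset.mem_erase.mpr ⟨fun hij => hj.2 (hij ▸ hi), Finset.mem_univ i⟩

end CommRing

end Ideal

theorem exists_stronglyAbsorbing_of_noetherian {A : Type*} [CommRing A]
    [IsNoetherianRing A] (α : Ideal A) :
    ∃ n : ℕ, 0 < n ∧ IsStronglyAbsorbing α n := by
  obtain ⟨n, hn⟩ := α.exists_absorbsSubproducts
  exact ⟨n + 1, n.succ_pos, (hn.mono n.le_succ).isStronglyAbsorbing⟩
end

section
/- For two polynomials g, h ∈ A[x] over a commutative ring A with deg(g) < ℓ, one has c(g)·c(h) = c(g(x)·h(x^ℓ)) and c(g) + c(h) = c(g(x) + x^ℓ·h(x)), where c(f) denotes the content ideal of f. -/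
/-!
Because `deg g < ℓ`, the coefficient of `X ^ (i + ℓ * j)` in `g * h(X ^ ℓ)` is exactly
`g_i * h_j` for `i < ℓ`, and the coefficients of `g + X ^ ℓ * h` are those of `g` below `ℓ`
followed by those of `h`. So the coefficient set of the product is the pointwise product, and
that of the sum the union, of the generating sets `{g_i | i < ℓ}` and `{h_j}`.
-/

open Polynomial

/-- The content ideal of a polynomial: the ideal generated by its coefficients. -/
def contentIdeal {A : Type*} [CommRing A] (f : A[X]) : Ideal A :=
  Ideal.span (Set.range f.coeff)

open scoped Pointwise

section ContentIdeal

variable {A : Type*} [CommRing A] {g : A[X]} {ℓ : ℕ}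

lemma coeff_eq_zero_of_degree_lt_of_le (hg : g.degree < ℓ) {n : ℕ} (hn : ℓ ≤ n) :
    g.coeff n = 0 :=
  coeff_eq_zero_of_degree_lt (hg.trans_le (by exact_mod_cast hn))

lemma contentIdeal_eq_span_coeff_image_Iio (hg : g.degree < ℓ) :
    _root_.contentIdeal g = Ideal.span (g.coeff '' Set.Iio ℓ) := by
  refine le_antisymm (Ideal.span_le.2 ?_) (Ideal.span_mono (Set.image_subset_range _ _))
  rintro _ ⟨n, rfl⟩
  rcases lt_or_ge n ℓ with hn | hn
  · exact Ideal.subset_span ⟨n, hn, rfl⟩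
  · simp [coeff_eq_zero_of_degree_lt_of_le hg hn]

lemma mul_expand_eq_X_pow_mul_add (g h : A[X]) :
    g * expand A ℓ h = X ^ ℓ * (g * expand A ℓ h.divX) + g * C (h.coeff 0) := by
  conv_lhs => rw [← X_mul_divX_add h]
  simp only [map_add, map_mul, expand_X, expand_C]
  ring

lemma coeff_mul_expand_add_mul (hg : g.degree < ℓ) {i : ℕ} (hi : i < ℓ) (j : ℕ) (h : A[X]) :
    (g * expand A ℓ h).coeff (i + ℓ * j) = g.coeff i * h.coeff j := by
  induction j generalizing h with
  | zero =>
    rw [mul_expand_eq_X_pow_mul_add, coeff_add, coeff_X_pow_mul', coeff_mul_C]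
    simp [hi]
  | succ j ih =>
    have hle : ℓ ≤ i + ℓ * (j + 1) := by nlinarith
    have hsub : i + ℓ * (j + 1) - ℓ = i + ℓ * j := by rw [Nat.mul_succ]; omega
    rw [mul_expand_eq_X_pow_mul_add, coeff_add, coeff_X_pow_mul', if_pos hle, hsub, ih,
      coeff_divX, coeff_mul_C, coeff_eq_zero_of_degree_lt_of_le hg hle, zero_mul, add_zero]

lemma range_coeff_mul_expand (hℓ : 0 < ℓ) (hg : g.degree < ℓ) (h : A[X]) :
    Set.range (g * expand A ℓ h).coeff = g.coeff '' Set.Iio ℓ * Set.range h.coeff := by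
  ext x
  simp only [Set.mem_range, Set.mem_mul, Set.mem_image, Set.mem_Iio]
  constructor
  · rintro ⟨n, rfl⟩
    refine ⟨_, ⟨n % ℓ, Nat.mod_lt n hℓ, rfl⟩, _, ⟨n / ℓ, rfl⟩, ?_⟩
    rw [← coeff_mul_expand_add_mul hg (Nat.mod_lt n hℓ), Nat.mod_add_div]
  · rintro ⟨_, ⟨i, hi, rfl⟩, _, ⟨j, rfl⟩, rfl⟩
    exact ⟨i + ℓ * j, coeff_mul_expand_add_mul hg hi j h⟩

lemma range_coeff_add_X_pow_mul (hg : g.degree < ℓ) (h : A[X]) :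
    Set.range (g + X ^ ℓ * h).coeff = g.coeff '' Set.Iio ℓ ∪ Set.range h.coeff := by
  ext x
  simp only [Set.mem_range, Set.mem_union, Set.mem_image, Set.mem_Iio]
  constructor
  · rintro ⟨n, rfl⟩
    rcases lt_or_ge n ℓ with hn | hn
    · exact Or.inl ⟨n, hn, by simp [coeff_X_pow_mul', hn]⟩
    · obtain ⟨m, rfl⟩ := Nat.exists_eq_add_of_le' hn
      exact Or.inr ⟨m, by simp [coeff_eq_zero_of_degree_lt_of_le hg hn]⟩
  · rintro (⟨i, hi, rfl⟩ | ⟨j, rfl⟩)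
    · exact ⟨i, by simp [coeff_X_pow_mul', hi]⟩
    · exact ⟨j + ℓ, by simp [coeff_eq_zero_of_degree_lt_of_le hg (Nat.le_add_left ℓ j)]⟩

lemma contentIdeal_mul_expand (hg : g.degree < ℓ) (h : A[X]) :
    _root_.contentIdeal g * _root_.contentIdeal h = _root_.contentIdeal (g * expand A ℓ h) := by
  rcases Nat.eq_zero_or_pos ℓ with rfl | hℓ
  · obtain rfl : g = 0 := by simpa using hg
    rw [zero_mul, contentIdeal_eq_span_coeff_image_Iio hg]
    simp
  rw [contentIdeal_eq_span_coeff_image_Iio hg, _root_.contentIdeal, _root_.contentIdeal,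
    Ideal.span_mul_span', range_coeff_mul_expand hℓ hg]

lemma contentIdeal_add_X_pow_mul (hg : g.degree < ℓ) (h : A[X]) :
    _root_.contentIdeal g + _root_.contentIdeal h = _root_.contentIdeal (g + X ^ ℓ * h) := by
  rw [contentIdeal_eq_span_coeff_image_Iio hg, _root_.contentIdeal, _root_.contentIdeal,
    range_coeff_add_X_pow_mul hg, Ideal.span_union, Submodule.add_eq_sup]

end ContentIdeal

theorem content_mul_add_shift {A : Type*} [CommRing A] (g h : A[X]) (ℓ : ℕ)
    (hg : g.degree < (ℓ : ℕ)) :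
    _root_.contentIdeal g * _root_.contentIdeal h = _root_.contentIdeal (g * h.comp (X ^ ℓ)) ∧
    _root_.contentIdeal g + _root_.contentIdeal h = _root_.contentIdeal (g + X ^ ℓ * h) :=
  ⟨expand_eq_comp_X_pow (f := h) ℓ ▸ contentIdeal_mul_expand hg h,
    contentIdeal_add_X_pow_mul hg h⟩
end

section
/- For any ideal α of a commutative ring A, if the polynomial extension α[x] is an n-absorbing ideal of A[x], then α is a strongly n-absorbing ideal of A. In other words, ω*(α) ≤ ω(α[x]). -/
open Polynomial

def IsNAbsorbing {A : Type*} [CommRing A] (α : Ideal A) (n : ℕ) : Prop :=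
  ∀ f : Fin (n + 1) → A, (∏ i, f i) ∈ α →
    ∃ j, (∏ i ∈ Finset.univ.erase j, f i) ∈ α

/-- If every tuple of elements of the ideals has product in `α`, then the product ideal
is contained in `α`. -/
lemma prod_ideal_le_of_forall {A : Type*} [CommRing A] {ι : Type*} [DecidableEq ι]
    (s : Finset ι) (γ : ι → Ideal A) (α : Ideal A)
    (H : ∀ c : ι → A, (∀ i ∈ s, c i ∈ γ i) → (∏ i ∈ s, c i) ∈ α) :
    (∏ i ∈ s, γ i) ≤ α := by
  induction s using Finset.induction generalizing α with
  | empty =>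
    have h1 := H (fun _ => 1) (by simp)
    simp only [Finset.prod_empty] at h1 ⊢
    rw [Ideal.one_eq_top, top_le_iff]
    exact (Ideal.eq_top_iff_one _).2 h1
  | @insert a t ha ih =>
    rw [Finset.prod_insert ha, Ideal.mul_le]
    intro r hr p hp
    have hcol : p ∈ α.colon (Ideal.span {r}) := by
      refine ih (α.colon (Ideal.span {r})) (fun c hc => ?_) hp
      rw [Ideal.mem_colon_span_singleton]
      have := H (Function.update c a r) (fun i hi => by
        rcases Finset.mem_insert.1 hi with h1 | h1
        · subst h1; simp [Function.update_self, hr]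
        · rw [Function.update_of_ne (by rintro rfl; exact ha h1)]
          exact hc i h1)
      rw [Finset.prod_insert ha, Function.update_self] at this
      have hprod : (∏ i ∈ t, Function.update c a r i) = ∏ i ∈ t, c i :=
        Finset.prod_congr rfl fun i hi =>
          Function.update_of_ne (by rintro rfl; exact ha hi) _ _
      rw [hprod] at this
      rwa [mul_comm]
    rw [Ideal.mem_colon_span_singleton] at hcol
    rwa [mul_comm]

/-- Uniqueness of base-`k` digits. -/
lemma digits_inj {k : ℕ} : ∀ {N : ℕ} (m m' : Fin N → ℕ), (∀ i, m i < k) → (∀ i, m' i < k) →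
    (∑ i, m i * k ^ (i : ℕ)) = (∑ i, m' i * k ^ (i : ℕ)) → m = m' := by
  intro N
  induction N with
  | zero => intro m m' _ _ _; funext i; exact i.elim0
  | succ N ih =>
    intro m m' hm hm' hsum
    have key : ∀ q : Fin (N + 1) → ℕ,
        (∑ i, q i * k ^ (i : ℕ)) = q 0 + k * ∑ i : Fin N, q i.succ * k ^ (i : ℕ) := by
      intro q
      rw [Fin.sum_univ_succ]
      simp only [Fin.val_zero, pow_zero, mul_one, Fin.val_succ]
      rw [Finset.mul_sum]
      congr 1
      refine Finset.sum_congr rfl fun i _ => ?_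
      ring
    rw [key m, key m'] at hsum
    have h0 : m 0 = m' 0 := by
      have := congrArg (· % k) hsum
      simpa [Nat.add_mul_mod_self_left, Nat.mod_eq_of_lt (hm 0), Nat.mod_eq_of_lt (hm' 0)]
        using this
    have hk : 0 < k := Nat.pos_of_ne_zero (by rintro rfl; exact Nat.not_lt_zero _ (hm 0))
    have htail : (∑ i : Fin N, m i.succ * k ^ (i : ℕ)) = ∑ i : Fin N, m' i.succ * k ^ (i : ℕ) := by
      rw [h0] at hsum
      exact Nat.eq_of_mul_eq_mul_left hk (Nat.add_left_cancel hsum)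
    have := ih (fun i => m i.succ) (fun i => m' i.succ) (fun i => hm _) (fun i => hm' _) htail
    funext i
    refine Fin.cases h0 (fun i => ?_) i
    exact congrFun this i

/-- Coefficient of a product of "spread-out" polynomials. -/
lemma coeff_prod_spread {A : Type*} [CommRing A] {N k : ℕ}
    (a : Fin N → Fin k → A) (E : ℕ) :
    (∏ i, ∑ m : Fin k, (C (a i m) * X ^ ((m : ℕ) * k ^ (i : ℕ)) : A[X])).coeff E =
      ∑ p : Fin N → Fin k,
        if (∑ i, (p i : ℕ) * k ^ (i : ℕ)) = E then ∏ i, a i (p i) else 0 := by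
  rw [Fintype.prod_sum]
  rw [Polynomial.finset_sum_coeff]
  refine Finset.sum_congr rfl fun p _ => ?_
  have : (∏ i, (C (a i (p i)) * X ^ ((p i : ℕ) * k ^ (i : ℕ)) : A[X])) =
      C (∏ i, a i (p i)) * X ^ (∑ i, (p i : ℕ) * k ^ (i : ℕ)) := by
    rw [Finset.prod_mul_distrib, map_prod, Finset.prod_pow_eq_pow_sum]
  rw [this, Polynomial.coeff_C_mul_X_pow]
  exact if_congr eq_comm rfl rfl

/-- If α[x] is n-absorbing in A[x], then α is strongly n-absorbing in A. -/
theorem stronglyAbsorbing_of_polynomial_nAbsorbing {A : Type*} [CommRing A]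
    (α : Ideal A) (n : ℕ) (h : IsNAbsorbing (α.map (C : A →+* A[X])) n) :
    IsStronglyAbsorbing α n := by
  classical
  intro γ hγ
  by_contra hcon
  push_neg at hcon
  have hw : ∀ j : Fin (n + 1), ∃ c : Fin (n + 1) → A,
      (∀ i ∈ Finset.univ.erase j, c i ∈ γ i) ∧ (∏ i ∈ Finset.univ.erase j, c i) ∉ α := by
    intro j
    by_contra hc
    push_neg at hc
    exact hcon j (prod_ideal_le_of_forall _ _ _ hc)
  choose c hc1 hc2 using hw
  -- a i m ∈ γ i for all m, and a i m = c m i for m ≠ i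
  set a : Fin (n + 1) → Fin (n + 1) → A := fun i m => if m = i then 0 else c m i with ha_def
  have ha : ∀ i m, a i m ∈ γ i := by
    intro i m
    by_cases hmi : m = i
    · simp [ha_def, hmi]
    · simp only [ha_def, if_neg hmi]
      exact hc1 m i (Finset.mem_erase.2 ⟨Ne.symm hmi, Finset.mem_univ _⟩)
  set f : Fin (n + 1) → A[X] :=
    fun i => ∑ m : Fin (n + 1), C (a i m) * X ^ ((m : ℕ) * (n + 1) ^ (i : ℕ)) with hf_def
  -- the full product lies in α[x]
  have hfull : (∏ i, f i) ∈ α.map (C : A →+* A[X]) := by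
    rw [Ideal.mem_map_C_iff]
    intro E
    rw [hf_def]
    rw [coeff_prod_spread a E]
    refine Ideal.sum_mem _ fun p _ => ?_
    split
    · exact hγ (Ideal.prod_mem_prod fun i _ => ha i (p i))
    · exact α.zero_mem
  obtain ⟨j, hj⟩ := h f hfull
  -- modified family: replace slot j with the constant 1 polynomial data
  set a' : Fin (n + 1) → Fin (n + 1) → A :=
    fun i m => if i = j then (if m = 0 then 1 else 0) else a i m with ha'_def
  set f' : Fin (n + 1) → A[X] :=
    fun i => ∑ m : Fin (n + 1), C (a' i m) * X ^ ((m : ℕ) * (n + 1) ^ (i : ℕ)) with hf'_def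
  have hfj : f' j = 1 := by
    rw [hf'_def]
    simp only
    rw [Finset.sum_eq_single (0 : Fin (n + 1))]
    · simp [ha'_def]
    · intro m _ hm
      simp [ha'_def, hm]
    · simp
  have heq : (∏ i, f' i) = ∏ i ∈ Finset.univ.erase j, f i := by
    rw [← Finset.mul_prod_erase Finset.univ f' (Finset.mem_univ j), hfj, one_mul]
    refine Finset.prod_congr rfl fun i hi => ?_
    have hij : i ≠ j := (Finset.mem_erase.1 hi).1
    rw [hf'_def, hf_def]
    simp only
    refine Finset.sum_congr rfl fun m _ => ?_
    rw [ha'_def]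
    simp [hij]
  rw [← heq] at hj
  rw [Ideal.mem_map_C_iff] at hj
  -- the target digit tuple
  set d : Fin (n + 1) → Fin (n + 1) := fun i => if i = j then 0 else j with hd_def
  have hcoeff := hj (∑ i, (d i : ℕ) * (n + 1) ^ (i : ℕ))
  rw [hf'_def, coeff_prod_spread a' _] at hcoeff
  rw [Finset.sum_eq_single d] at hcoeff
  · rw [if_pos rfl] at hcoeff
    have hval : (∏ i, a' i (d i)) = ∏ i ∈ Finset.univ.erase j, c j i := by
      rw [← Finset.mul_prod_erase Finset.univ (fun i => a' i (d i)) (Finset.mem_univ j)]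
      have h1 : a' j (d j) = 1 := by simp [ha'_def, hd_def]
      rw [h1, one_mul]
      refine Finset.prod_congr rfl fun i hi => ?_
      have hij : i ≠ j := (Finset.mem_erase.1 hi).1
      simp only [ha'_def, hd_def, if_neg hij]
      rw [ha_def]
      simp only
      rw [if_neg (Ne.symm hij)]
    rw [hval] at hcoeff
    exact hc2 j hcoeff
  · intro p _ hp
    rw [if_neg]
    intro hsum
    apply hp
    have hfn := digits_inj (fun i => ((p i : ℕ))) (fun i => ((d i : ℕ)))
      (fun i => (p i).isLt) (fun i => (d i).isLt) hsum
    funext i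
    exact Fin.ext (congrFun hfn i)
  · intro hd
    exact absurd (Finset.mem_univ d) hd
end

section
/- Let F be a field, V an F-vector space, and A = F(+)V the idealization (trivial extension) of V, i.e., the ring F ⊕ V with multiplication (r,m)(s,n) = (rs, rn + sm). Then every proper ideal of A is 2-absorbing. -/
def IsTwoAbsorbing {A : Type*} [CommRing A] (α : Ideal A) : Prop :=
  ∀ a b c : A, a * b * c ∈ α → a * b ∈ α ∨ a * c ∈ α ∨ b * c ∈ α

/-- Every proper ideal of the idealization F(+)V of a vector space V over a field F
is 2-absorbing. -/
theorem idealization_two_absorbing {F V : Type*} [Field F] [AddCommGroup V]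
    [Module F V] [Module Fᵐᵒᵖ V] [IsCentralScalar F V] (α : Ideal (TrivSqZeroExt F V)) (hα : α ≠ ⊤) :
    IsTwoAbsorbing α := by
  intro a b c habc
  by_cases ha : a.fst = 0
  · by_cases hb : b.fst = 0
    · left
      have : a * b = 0 := by
        ext
        · simp [ha, hb]
        · simp [ha, hb]
      simp [this]
    · right; left
      have hub : IsUnit b := TrivSqZeroExt.isUnit_iff_isUnit_fst.mpr (isUnit_iff_ne_zero.mpr hb)
      have : b * (a * c) ∈ α := by
        have : b * (a * c) = a * b * c := by ring
        rwa [this]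
      exact (Ideal.unit_mul_mem_iff_mem α hub).mp this
  · right; right
    have hua : IsUnit a := TrivSqZeroExt.isUnit_iff_isUnit_fst.mpr (isUnit_iff_ne_zero.mpr ha)
    have : a * (b * c) ∈ α := by rwa [← mul_assoc]
    exact (Ideal.unit_mul_mem_iff_mem α hua).mp this
end

section
/- Let α be an ideal of a commutative Noetherian ring A and γ an ideal with γ ⊄ α. Then every associated prime of the colon ideal (α : γ) is an associated prime of α. -/
/-!
If `s` is a finite generating set of `γ`, then `r ↦ (r g mod α)_{g ∈ s}` has kernel `(α : γ)`,
so `A ⧸ (α : γ)` embeds into `(A ⧸ α)^s`. An associated prime of a finite power is associated to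
a factor: the radical of the annihilator of a tuple is the finite intersection of the radicals of
the annihilators of its entries, and a prime that is a finite intersection of ideals equals one
of them.
-/

open Submodule

section Pi

variable {R M ι : Type*} [CommSemiring R] [AddCommMonoid M] [Module R M]

theorem Submodule.colon_bot_singleton_pi (x : ι → M) :
    (⊥ : Submodule R (ι → M)).colon {x} = ⨅ i, (⊥ : Submodule R M).colon {x i} := by
  ext r
  simp only [mem_colon_singleton, mem_bot, Ideal.mem_iInf, funext_iff, Pi.smul_apply,
    Pi.zero_apply]

theorem associatedPrimes.pi_subset [Finite ι] :
    associatedPrimes R (ι → M) ⊆ associatedPrimes R M := by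
  rintro p ⟨hp, x, rfl⟩
  have := Fintype.ofFinite ι
  rw [colon_bot_singleton_pi, ← Finset.inf_univ_eq_iInf, ← Ideal.radicalInfTopHom_apply,
    map_finset_inf] at hp ⊢
  obtain ⟨i, -, hi⟩ := Ideal.eq_inf_of_isPrime_inf hp
  exact ⟨hp, x i, hi.symm⟩

end Pi

section Colon

variable {R M : Type*} [CommRing R] [AddCommGroup M] [Module R M]

def Submodule.colonToPi (N : Submodule R M) (S : Set M) : R →ₗ[R] S → M ⧸ N :=
  LinearMap.pi fun s => LinearMap.toSpanSingleton R (M ⧸ N) (N.mkQ s)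

theorem Submodule.ker_colonToPi (N : Submodule R M) (S : Set M) :
    LinearMap.ker (N.colonToPi S) = N.colon S := by
  ext r
  simp [colonToPi, mem_colon, funext_iff, ← Quotient.mk_smul, Quotient.mk_eq_zero]

theorem associatedPrimes.quotient_colon_subset (N : Submodule R M) (S : Set M) :
    associatedPrimes R (R ⧸ N.colon S) ⊆ associatedPrimes R (S → M ⧸ N) :=
  subset_of_injective (f := (N.colon S).liftQ (N.colonToPi S) (ker_colonToPi N S).ge)
    (LinearMap.ker_eq_bot.mp (ker_liftQ_eq_bot' _ _ (ker_colonToPi N S).symm))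

end Colon

theorem associatedPrimes_colon_subset_general {A : Type*} [CommRing A] [IsNoetherianRing A]
    (α γ : Ideal A) (p : Ideal A)
    (hp : p ∈ associatedPrimes A (A ⧸ (α.colon γ))) :
    p ∈ associatedPrimes A (A ⧸ α) := by
  obtain ⟨s, rfl⟩ := IsNoetherian.noetherian γ
  rw [Ideal.colon_span] at hp
  exact associatedPrimes.pi_subset (associatedPrimes.quotient_colon_subset α s hp)

/-- Every associated prime of the colon ideal (α : γ) is an associated prime of α,
for ideals of a Noetherian ring with γ ⊄ α. -/
theorem associatedPrimes_colon_subset {A : Type*} [CommRing A] [IsNoetherianRing A]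
    (α γ : Ideal A) (hγ : ¬ γ ≤ α) (p : Ideal A)
    (hp : p ∈ associatedPrimes A (A ⧸ (α.colon γ))) :
    p ∈ associatedPrimes A (A ⧸ α) :=
  associatedPrimes_colon_subset_general α γ p hp
end

section
/- Let A be a commutative Noetherian ring and α an ideal. A prime ideal p of A is an associated prime of α if and only if p = (α : (α : p)). -/
/-!
In a commutative ring `J : (J : S) ⊇ S` for every set `S`, so `P ⊆ (α : (α : P))` always, and
`(α : -)` takes the same value on a set and on its double colon; in particular
`P = (α : f)` is its own double colon. Conversely, if `P = (α : (α : P))`, write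
`(α : P) = (f₁, …, fₙ)` using Noetherianity; then `P = (α : f₁) ∩ … ∩ (α : fₙ)`, so by primality
`(α : fᵢ) ⊆ P` for some `i`, while `fᵢ ∈ (α : P)` gives `P = (α : (α : P)) ⊆ (α : fᵢ)`.
-/

namespace Submodule

variable {R M : Type*}

theorem bot_colon_singleton_mkQ [Ring R] [AddCommGroup M] [Module R M] (N : Submodule R M)
    (x : M) : (⊥ : Submodule R (M ⧸ N)).colon {N.mkQ x} = N.colon {x} := by
  ext r
  simp only [mem_colon_singleton, mem_bot, mkQ_apply, ← Quotient.mk_smul, Quotient.mk_eq_zero]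

theorem colon_finset_eq_inf [CommSemiring R] [AddCommMonoid M] [Module R M] (N : Submodule R M)
    (s : Finset M) : N.colon ↑s = s.inf fun x ↦ N.colon {x} := by
  ext r
  simp [mem_colon, mem_finsetInf]

end Submodule

namespace Ideal

variable {R : Type*} [CommSemiring R]

theorem subset_colon_colon (J : Ideal R) (S : Set R) : S ⊆ J.colon (J.colon S) :=
  fun r hr ↦ Submodule.mem_colon.mpr fun s hs ↦ by
    simpa only [smul_eq_mul, mul_comm] using Submodule.mem_colon.mp hs r hr

theorem colon_colon_colon (J : Ideal R) (S : Set R) :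
    J.colon (J.colon (J.colon S)) = J.colon S :=
  le_antisymm (Submodule.colon_mono le_rfl (J.subset_colon_colon S)) (J.subset_colon_colon _)

theorem IsPrime.exists_colon_singleton_le {M : Type*} [AddCommMonoid M] [Module R M]
    {P : Ideal R} (hP : P.IsPrime) (N : Submodule R M) {s : Finset M} (h : N.colon ↑s ≤ P) :
    ∃ x ∈ s, N.colon {x} ≤ P :=
  hP.inf_le'.mp (N.colon_finset_eq_inf s ▸ h)

theorem exists_eq_colon_singleton_of_eq_colon_colon [IsNoetherianRing R] {J P : Ideal R}
    (hP : P.IsPrime) (h : P = J.colon (J.colon P)) : ∃ f, P = J.colon {f} := by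
  obtain ⟨s, hs⟩ : (J.colon P).FG := IsNoetherian.noetherian _
  obtain ⟨f, hfs, hf_le⟩ : ∃ f ∈ s, J.colon {f} ≤ P :=
    hP.exists_colon_singleton_le J (by rw [← Ideal.colon_span, hs, ← h])
  have hf : f ∈ J.colon P := hs ▸ subset_span hfs
  refine ⟨f, le_antisymm ?_ hf_le⟩
  exact h.trans_le (Submodule.colon_mono le_rfl (Set.singleton_subset_iff.mpr hf))

theorem mem_associatedPrimes_quotient_iff {R : Type*} [CommRing R] [IsNoetherianRing R]
    {I P : Ideal R} : P ∈ associatedPrimes R (R ⧸ I) ↔ P.IsPrime ∧ ∃ f, P = I.colon {f} := by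
  rw [AssociatedPrimes.mem_iff, isAssociatedPrime_iff, Quotient.mk_surjective.exists]
  simp only [← I.bot_colon_singleton_mkQ]
  rfl

end Ideal

/-- In a Noetherian ring, a prime p is an associated prime of α iff p = (α : (α : p)). -/
theorem associatedPrime_iff_colon_colon {A : Type*} [CommRing A] [IsNoetherianRing A]
    (α p : Ideal A) (hp : p.IsPrime) :
    p ∈ associatedPrimes A (A ⧸ α) ↔ p = α.colon (α.colon p) := by
  rw [Ideal.mem_associatedPrimes_quotient_iff, and_iff_right hp]
  constructor
  · rintro ⟨f, rfl⟩
    exact (α.colon_colon_colon {f}).symm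
  · exact Ideal.exists_eq_colon_singleton_of_eq_colon_colon hp
end

section
/- (Davis' Prime Avoidance) Let β be an ideal of a commutative ring A, let p₁,...,p_n be finitely many prime ideals of A, and let f ∈ A. If ⟨f⟩ + β ⊄ p_i for all i, then there exists g ∈ β such that f + g ∉ p₁ ∪ ... ∪ p_n. -/
/-!
Induct on the finite set of primes, removing a minimal one `P`. A solution `g` for the others that
fails at `P` is corrected to `g + b * c`, where `b ∈ β \ P` and `c` lies in every other prime but
not in `P` (possible since `P` is prime and minimal). The correction does not change `f + g` modulo
the other primes and moves it out of `P`.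
-/

open Finset

namespace Ideal

variable {A : Type*} [CommRing A]

theorem exists_mem_add_mul_notMem {P I : Ideal A} [P.IsPrime] {f g c : A} (hg : g ∈ I)
    (hfI : ¬ span {f} + I ≤ P) (hc : c ∉ P) : ∃ b ∈ I, f + (g + b * c) ∉ P := by
  by_cases hfg : f + g ∈ P
  · have hIP : ¬ I ≤ P := fun hIP ↦ hfI <| by
      rw [Submodule.add_eq_sup, sup_le_iff, span_singleton_le_iff_mem]
      exact ⟨by simpa using P.sub_mem hfg (hIP hg), hIP⟩
    obtain ⟨b, hbI, hbP⟩ := SetLike.not_le_iff_exists.mp hIP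
    refine ⟨b, hbI, fun hmem ↦ ?_⟩
    have hbc : b * c ∈ P := by simpa [← add_assoc] using P.sub_mem hmem hfg
    exact (IsPrime.mem_or_mem ‹_› hbc).elim hbP hc
  · exact ⟨0, I.zero_mem, by simpa using hfg⟩

theorem exists_mem_forall_add_notMem (β : Ideal A) (f : A) (S : Finset (Ideal A))
    (hS : ∀ q ∈ S, q.IsPrime) (h : ∀ q ∈ S, ¬ span {f} + β ≤ q) :
    ∃ g ∈ β, ∀ q ∈ S, f + g ∉ q := by
  classical
  induction S using Finset.strongInduction with
  | H S ih =>
  rcases S.eq_empty_or_nonempty with rfl | hne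
  · exact ⟨0, β.zero_mem, by simp⟩
  obtain ⟨P, hPS, hPmin⟩ := S.exists_minimal hne
  have hP := hS P hPS
  obtain ⟨g, hgβ, hg⟩ := ih (S.erase P) (S.erase_ssubset hPS)
    (fun q hq ↦ hS q (mem_of_mem_erase hq)) (fun q hq ↦ h q (mem_of_mem_erase hq))
  obtain ⟨c, hcS, hcP⟩ : ∃ c ∈ (S.erase P).inf id, c ∉ P := by
    refine SetLike.not_le_iff_exists.mp ?_
    rw [hP.inf_le']
    rintro ⟨q, hq, hqP⟩
    exact (mem_erase.mp hq).1 (le_antisymm hqP (hPmin (mem_of_mem_erase hq) hqP))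
  obtain ⟨b, hbβ, hbP⟩ := exists_mem_add_mul_notMem hgβ (h P hPS) hcP
  refine ⟨g + b * c, β.add_mem hgβ (β.mul_mem_right c hbβ), fun q hq hmem ↦ ?_⟩
  rcases eq_or_ne q P with rfl | hqP
  · exact hbP hmem
  · have hq' : q ∈ S.erase P := mem_erase.mpr ⟨hqP, hq⟩
    have hcq : c ∈ q := Finset.inf_le (f := id) hq' hcS
    exact hg q hq' (by simpa only [← add_assoc, add_sub_cancel_right] using q.sub_mem hmem (q.mul_mem_left b hcq))

end Ideal

/-- Davis' Prime Avoidance Lemma. -/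
theorem davis_prime_avoidance {A : Type*} [CommRing A] (β : Ideal A) (n : ℕ)
    (p : Fin n → Ideal A) (hp : ∀ i, (p i).IsPrime) (f : A)
    (h : ∀ i, ¬ (Ideal.span {f} + β ≤ p i)) :
    ∃ g ∈ β, ∀ i, f + g ∉ p i := by
  classical
  obtain ⟨g, hgβ, hg⟩ := Ideal.exists_mem_forall_add_notMem β f (univ.image p)
    (by simpa using hp) (by simpa using h)
  exact ⟨g, hgβ, fun i ↦ hg (p i) (mem_image_of_mem p (mem_univ i))⟩
end

section
/- For a product ring A = A₁ × A₂ of commutative rings, the least n such that the zero ideal of A is strongly n-absorbing is the sum of the corresponding least values for A₁ and A₂ (assuming both are finite). -/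
/-!
Merging surplus ideals into one shows that `α` is strongly `n`-absorbing iff every finite family of
ideals with product in `α` has a subfamily of at most `n` members with product in `α`. An ideal
of `A₁ × A₂` lies in `α₁ × α₂` iff its two projections do, so such subfamilies for the two
projections combine into one of at most `n₁ + n₂` members. Conversely, families `β` in `A₁` and
`δ` in `A₂` of sizes `ω*(α₁)` and `ω*(α₂)` none of whose members can be dropped give the family
`β i × A₂`, `A₁ × δ k` in `A₁ × A₂`, none of whose members can be dropped either.
-/

open Finset

namespace Ideal

variable {R S : Type*} [CommRing R] [CommRing S]

theorem le_prod_iff {I : Ideal (R × S)} {J : Ideal R} {K : Ideal S} :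
    I ≤ J.prod K ↔ I.map (RingHom.fst R S) ≤ J ∧ I.map (RingHom.snd R S) ≤ K :=
  ⟨fun h => ⟨(map_mono h).trans (map_fst_prod J K).le, (map_mono h).trans (map_snd_prod J K).le⟩,
    fun h => (ideal_prod_eq I).trans_le (prod_mono h.1 h.2)⟩

theorem map_finsetProd {ι : Type*} (f : R →+* S) (s : Finset ι) (I : ι → Ideal R) :
    (∏ i ∈ s, I i).map f = ∏ i ∈ s, (I i).map f :=
  map_prod (mapHom f) I s

theorem finsetProd_le_of_subset {ι : Type*} (I : ι → Ideal R) {s t : Finset ι} (h : s ⊆ t) :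
    ∏ i ∈ t, I i ≤ ∏ i ∈ s, I i :=
  prod_le_prod_of_subset_of_le_one' h fun _ _ _ => le_top.trans_eq one_eq_top.symm

end Ideal

section

variable {A : Type*} [CommRing A] {α : Ideal A} {n : ℕ} {ι : Type*} [DecidableEq ι]

theorem IsStronglyAbsorbing.exists_erase_of_card_eq (h : IsStronglyAbsorbing α n)
    (f : ι → Ideal A) {s : Finset ι} (hs : #s = n + 1) (hp : ∏ i ∈ s, f i ≤ α) :
    ∃ j ∈ s, ∏ i ∈ s.erase j, f i ≤ α := by
  let φ : Fin (n + 1) ↪ ι :=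
    (s.equivFinOfCardEq hs).symm.toEmbedding.trans (Function.Embedding.subtype _)
  have hφ : univ.map φ = s := by
    rw [← map_map, univ_map_equiv_to_embedding, univ_eq_attach, attach_map_val]
  obtain ⟨j, hj⟩ := h (fun i => f (φ i)) (by rwa [← prod_map, hφ])
  refine ⟨φ j, hφ ▸ mem_map_of_mem φ (mem_univ j), ?_⟩
  rwa [← prod_map, map_erase, hφ] at hj

theorem IsStronglyAbsorbing.exists_erase (h : IsStronglyAbsorbing α n) (f : ι → Ideal A)
    {s : Finset ι} (hs : n < #s) (hp : ∏ i ∈ s, f i ≤ α) :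
    ∃ j ∈ s, ∏ i ∈ s.erase j, f i ≤ α := by
  obtain ⟨u, hus, hu⟩ := exists_subset_card_eq hs.le
  obtain ⟨a, ha⟩ : (s \ u).Nonempty := by
    rw [← card_pos, card_sdiff_of_subset hus]
    omega
  have has : a ∈ s := (mem_sdiff.1 ha).1
  have hau : a ∉ u := (mem_sdiff.1 ha).2
  -- merge the ideals indexed by `s \ u` into a single one, placed at the index `a`
  set g := Function.update f a (∏ i ∈ s \ u, f i) with hg_def
  have hg : ∀ v ⊆ u, ∏ i ∈ insert a v, g i = (∏ i ∈ s \ u, f i) * ∏ i ∈ v, f i := fun v hv => by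
    rw [prod_insert fun hav => hau (hv hav), hg_def, Function.update_self,
      prod_update_of_notMem fun hav => hau (hv hav)]
  obtain ⟨j, hj, hjα⟩ := h.exists_erase_of_card_eq g (by rw [card_insert_of_notMem hau, hu])
    (by rwa [hg u subset_rfl, prod_sdiff hus])
  rcases eq_or_ne j a with rfl | hja
  · refine ⟨j, has, (Ideal.finsetProd_le_of_subset f (s := u) ?_).trans ?_⟩
    · exact fun i hi => mem_erase.2 ⟨fun hij => hau (hij ▸ hi), hus hi⟩
    · rwa [erase_insert hau, hg_def, prod_update_of_notMem hau] at hjα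
  · have hju : j ∈ u := (mem_insert.1 hj).resolve_left hja
    have hsu : s.erase j \ u.erase j = s \ u := by
      ext i
      by_cases hij : i = j <;> simp [hij, hju]
    refine ⟨j, hus hju, ?_⟩
    rwa [erase_insert_of_ne (Ne.symm hja), hg _ (erase_subset _ _), ← hsu,
      prod_sdiff (erase_subset_erase j hus)] at hjα

theorem IsStronglyAbsorbing.exists_subset_card_le (h : IsStronglyAbsorbing α n)
    (f : ι → Ideal A) (s : Finset ι) (hp : ∏ i ∈ s, f i ≤ α) :
    ∃ t ⊆ s, #t ≤ n ∧ ∏ i ∈ t, f i ≤ α := by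
  induction s using Finset.strongInduction with
  | H s ih =>
    by_cases hs : #s ≤ n
    · exact ⟨s, subset_rfl, hs, hp⟩
    obtain ⟨j, hj, hjα⟩ := h.exists_erase f (not_le.1 hs) hp
    obtain ⟨t, hts, ht⟩ := ih _ (erase_ssubset hj) hjα
    exact ⟨t, hts.trans (erase_subset _ _), ht⟩

theorem exists_fin_sInf_prod_le_and_not_erase_le (h : ∃ n, IsStronglyAbsorbing α n) :
    ∃ β : Fin (sInf {n | IsStronglyAbsorbing α n}) → Ideal A,
      ∏ i, β i ≤ α ∧ ∀ j, ¬ ∏ i ∈ univ.erase j, β i ≤ α := by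
  obtain ⟨N, hN⟩ : ∃ N, sInf {n | IsStronglyAbsorbing α n} = N := ⟨_, rfl⟩
  have habs : IsStronglyAbsorbing α N := hN ▸ Nat.sInf_mem h
  rw [hN]
  cases N with
  | zero =>
    obtain ⟨j, hj⟩ := habs (fun _ => α) (by simp)
    rw [show univ.erase j = ∅ from eq_empty_of_forall_notMem fun i hi =>
      (mem_erase.1 hi).1 (Subsingleton.elim (α := Fin 1) i j), prod_empty] at hj
    exact ⟨Fin.elim0, by simpa using hj, fun j => j.elim0⟩
  | succ k =>
    have hk : ¬ IsStronglyAbsorbing α k := Nat.notMem_of_lt_sInf (by rw [hN]; exact k.lt_succ_self)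
    unfold IsStronglyAbsorbing at hk
    push Not at hk
    exact hk

end

section

variable {A₁ A₂ : Type*} [CommRing A₁] [CommRing A₂] {α₁ : Ideal A₁} {α₂ : Ideal A₂}

theorem IsStronglyAbsorbing.prod {n₁ n₂ : ℕ} (h₁ : IsStronglyAbsorbing α₁ n₁)
    (h₂ : IsStronglyAbsorbing α₂ n₂) : IsStronglyAbsorbing (α₁.prod α₂) (n₁ + n₂) := by
  intro γ hγ
  rw [Ideal.le_prod_iff, Ideal.map_finsetProd, Ideal.map_finsetProd] at hγ
  obtain ⟨t₁, -, ht₁, hγ₁⟩ := h₁.exists_subset_card_le _ univ hγ.1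
  obtain ⟨t₂, -, ht₂, hγ₂⟩ := h₂.exists_subset_card_le _ univ hγ.2
  obtain ⟨j, -, hj⟩ : ∃ j ∈ univ, j ∉ t₁ ∪ t₂ := exists_mem_notMem_of_card_lt_card <| by
    rw [card_univ, Fintype.card_fin]
    exact (card_union_le t₁ t₂).trans_lt (by omega)
  have hsub : ∀ t ⊆ t₁ ∪ t₂, t ⊆ univ.erase j := fun t ht i hi =>
    mem_erase.2 ⟨fun hij => hj (by subst hij; exact ht hi), mem_univ i⟩
  refine ⟨j, Ideal.le_prod_iff.2 ⟨?_, ?_⟩⟩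
  · rw [Ideal.map_finsetProd]
    exact (Ideal.finsetProd_le_of_subset _ (hsub t₁ subset_union_left)).trans hγ₁
  · rw [Ideal.map_finsetProd]
    exact (Ideal.finsetProd_le_of_subset _ (hsub t₂ subset_union_right)).trans hγ₂

theorem IsStronglyAbsorbing.card_add_card_le {ι₁ ι₂ : Type*} [Fintype ι₁] [Fintype ι₂]
    [DecidableEq ι₁] [DecidableEq ι₂] {m : ℕ} (h : IsStronglyAbsorbing (α₁.prod α₂) m)
    {β : ι₁ → Ideal A₁} (hβ : ∏ i, β i ≤ α₁) (hβ' : ∀ j, ¬ ∏ i ∈ univ.erase j, β i ≤ α₁)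
    {δ : ι₂ → Ideal A₂} (hδ : ∏ i, δ i ≤ α₂) (hδ' : ∀ j, ¬ ∏ i ∈ univ.erase j, δ i ≤ α₂) :
    Fintype.card ι₁ + Fintype.card ι₂ ≤ m := by
  let γ : ι₁ ⊕ ι₂ → Ideal (A₁ × A₂) :=
    Sum.elim (fun i => (β i).prod ⊤) (fun k => (⊤ : Ideal A₁).prod (δ k))
  have hfst : ∀ t, (∏ x ∈ t, γ x).map (RingHom.fst A₁ A₂) = ∏ i ∈ t.toLeft, β i := fun t => by
    conv_lhs => rw [← toLeft_disjSum_toRight (u := t)]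
    rw [prod_disjSum, Ideal.map_mul, Ideal.map_finsetProd, Ideal.map_finsetProd]
    simp [γ, ← Ideal.one_eq_top]
  have hsnd : ∀ t, (∏ x ∈ t, γ x).map (RingHom.snd A₁ A₂) = ∏ k ∈ t.toRight, δ k := fun t => by
    conv_lhs => rw [← toLeft_disjSum_toRight (u := t)]
    rw [prod_disjSum, Ideal.map_mul, Ideal.map_finsetProd, Ideal.map_finsetProd]
    simp [γ, ← Ideal.one_eq_top]
  have hγ : ∏ x, γ x ≤ α₁.prod α₂ :=
    Ideal.le_prod_iff.2 ⟨by rw [hfst]; simpa using hβ, by rw [hsnd]; simpa using hδ⟩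
  obtain ⟨t, -, htm, ht⟩ := h.exists_subset_card_le γ univ hγ
  rw [Ideal.le_prod_iff, hfst, hsnd] at ht
  by_contra! hlt
  obtain ⟨x, -, hx⟩ : ∃ x ∈ univ, x ∉ t := exists_mem_notMem_of_card_lt_card <| by
    rw [card_univ, Fintype.card_sum]
    omega
  rcases x with i | k
  · refine hβ' i ((Ideal.finsetProd_le_of_subset β fun i' hi' => ?_).trans ht.1)
    exact mem_erase.2 ⟨fun hii' => hx (by subst hii'; simpa using hi'), mem_univ i'⟩
  · refine hδ' k ((Ideal.finsetProd_le_of_subset δ fun k' hk' => ?_).trans ht.2)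
    exact mem_erase.2 ⟨fun hkk' => hx (by subst hkk'; simpa using hk'), mem_univ k'⟩

end

/-- For a product ring A₁ × A₂, ω*(0) = ω*(0 in A₁) + ω*(0 in A₂), assuming both
are finite. -/
theorem strongly_absorbing_number_prod {A₁ A₂ : Type*} [CommRing A₁] [CommRing A₂]
    (h₁ : ∃ n, IsStronglyAbsorbing (⊥ : Ideal A₁) n)
    (h₂ : ∃ n, IsStronglyAbsorbing (⊥ : Ideal A₂) n) :
    sInf {n : ℕ | IsStronglyAbsorbing (⊥ : Ideal (A₁ × A₂)) n} =
      sInf {n : ℕ | IsStronglyAbsorbing (⊥ : Ideal A₁) n} +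
      sInf {n : ℕ | IsStronglyAbsorbing (⊥ : Ideal A₂) n} := by
  have hsum := IsStronglyAbsorbing.prod (Nat.sInf_mem h₁) (Nat.sInf_mem h₂)
  rw [Ideal.prod_bot_bot] at hsum
  obtain ⟨β, hβ, hβ'⟩ := exists_fin_sInf_prod_le_and_not_erase_le h₁
  obtain ⟨δ, hδ, hδ'⟩ := exists_fin_sInf_prod_le_and_not_erase_le h₂
  refine le_antisymm (Nat.sInf_le hsum) (le_csInf ⟨_, hsum⟩ fun m hm => ?_)
  rw [Set.mem_ofPred_eq, ← Ideal.prod_bot_bot] at hm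
  simpa using hm.card_add_card_le hβ hβ' hδ hδ'
end

section
/- (McCoy-type result for several variables) Let γ be a nonzero ideal of A[x₁,...,x_n] over a commutative ring A and let f ∈ A[x₁,...,x_n] be nonzero with fγ = 0. Then there exists a ∈ A such that af ≠ 0 and c(af)·γ = 0, where c(af) is the ideal of A generated by the coefficients of af. -/
/-!
Fix a monomial order. If some coefficient `c` of some `g ∈ γ` has `c f ≠ 0`, discard from `g`
the terms whose coefficients kill `f`: the rest `g₁` still satisfies `f g₁ = 0`, and comparing
leading terms shows that its leading coefficient `b` kills the leading coefficient of `f`, while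
`b f ≠ 0`. So `b f` is a nonzero multiple of `f` with smaller support that still annihilates `γ`;
iterating, the support cannot shrink forever, and the process stops at some `a f ≠ 0` killed by
every coefficient of every element of `γ`.
-/

open MvPolynomial

namespace MvPolynomial

variable {σ R : Type*} [CommSemiring R]

theorem forall_C_coeff_mul_eq_zero_comm {p q : MvPolynomial σ R} :
    (∀ d, C (p.coeff d) * q = 0) ↔ ∀ e, C (q.coeff e) * p = 0 := by
  simp only [MvPolynomial.ext_iff, coeff_C_mul, coeff_zero, mul_comm (q.coeff _)]
  exact forall_comm

end MvPolynomial

namespace MonomialOrder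

variable {σ R : Type*} [CommSemiring R] (m : MonomialOrder σ)

theorem exists_C_mul_ne_zero_and_mul_leadingCoeff_eq_zero {f g : MvPolynomial σ R}
    (hfg : f * g = 0) {e : σ →₀ ℕ} (he : C (g.coeff e) * f ≠ 0) :
    ∃ b, C b * f ≠ 0 ∧ b * m.leadingCoeff f = 0 := by
  classical
  set s := g.support.filter fun e => C (g.coeff e) * f ≠ 0
  set g₁ := ∑ e ∈ s, monomial e (g.coeff e)
  have coeff_g₁ (e) : g₁.coeff e = if e ∈ s then g.coeff e else 0 := by
    simp only [g₁, coeff_sum, coeff_monomial, Finset.sum_ite_eq']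
  have mul_g₁ : f * g₁ = 0 := by
    have kills (e) (h : C (g.coeff e) * f = 0) : f * monomial e (g.coeff e) = 0 := by
      rw [← mul_one (g.coeff e), ← C_mul_monomial, ← mul_assoc, mul_comm f, h, zero_mul]
    calc f * g₁ = ∑ e ∈ s, f * monomial e (g.coeff e) := Finset.mul_sum ..
      _ = ∑ e ∈ g.support, f * monomial e (g.coeff e) :=
        Finset.sum_filter_of_ne fun e _ => mt (kills e)
      _ = 0 := by rw [← Finset.mul_sum, ← as_sum, hfg]
  have hs : e ∈ s := Finset.mem_filter.2 ⟨mem_support_iff.2 fun h => he (by simp [h]), he⟩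
  have hg₁ : g₁ ≠ 0 := by
    refine ne_zero_iff.2 ⟨e, ?_⟩
    rw [coeff_g₁, if_pos hs]
    exact mem_support_iff.1 (Finset.mem_filter.1 hs).1
  have hdeg : m.degree g₁ ∈ s := by
    by_contra h
    exact m.leadingCoeff_ne_zero_iff.2 hg₁ (by simp [leadingCoeff, coeff_g₁, h])
  refine ⟨g.coeff (m.degree g₁), (Finset.mem_filter.1 hdeg).2, ?_⟩
  calc g.coeff (m.degree g₁) * m.leadingCoeff f
      = m.leadingCoeff f * m.leadingCoeff g₁ := by
        rw [mul_comm]; exact congrArg _ ((coeff_g₁ _).trans (if_pos hdeg)).symm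
    _ = 0 := by rw [← coeff_mul_of_degree_add, mul_g₁, coeff_zero]

theorem support_C_mul_ssubset {f : MvPolynomial σ R} {b : R} (hbf : C b * f ≠ 0)
    (hb : b * m.leadingCoeff f = 0) : (C b * f).support ⊂ f.support := by
  have hf : f ≠ 0 := by rintro rfl; simp at hbf
  refine (Finset.ssubset_iff_of_subset fun d hd => ?_).2
    ⟨m.degree f, m.degree_mem_support hf, ?_⟩
  · rw [mem_support_iff, coeff_C_mul] at hd
    rw [mem_support_iff]
    exact right_ne_zero_of_mul hd
  · rwa [mem_support_iff, coeff_C_mul, not_not]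

end MonomialOrder

namespace MvPolynomial

variable {σ R : Type*} [CommSemiring R] [LinearOrder σ] [WellFoundedGT σ]

theorem exists_C_mul_ne_zero_and_C_coeff_mul_eq_zero (S : Set (MvPolynomial σ R))
    {f : MvPolynomial σ R} (hf : f ≠ 0) (hfS : ∀ g ∈ S, f * g = 0) :
    ∃ a, C a * f ≠ 0 ∧ ∀ d, ∀ g ∈ S, C ((C a * f).coeff d) * g = 0 := by
  induction hN : f.support.card using Nat.strong_induction_on generalizing f with
  | _ N ih =>
  by_cases hkilled : ∀ g ∈ S, ∀ e, C (g.coeff e) * f = 0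
  · refine ⟨1, by rwa [C_1, one_mul], fun d g hg => ?_⟩
    rw [C_1, one_mul]
    exact forall_C_coeff_mul_eq_zero_comm.2 (hkilled g hg) d
  push Not at hkilled
  obtain ⟨g, hg, e, he⟩ := hkilled
  obtain ⟨b, hbf, hb⟩ :=
    MonomialOrder.lex.exists_C_mul_ne_zero_and_mul_leadingCoeff_eq_zero (hfS g hg) he
  have hcard : (C b * f).support.card < N :=
    hN ▸ Finset.card_lt_card (MonomialOrder.lex.support_C_mul_ssubset hbf hb)
  obtain ⟨a, haf, ha⟩ :=
    ih _ hcard hbf (fun g hg => by rw [mul_assoc, hfS g hg, mul_zero]) rfl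
  exact ⟨a * b, by rwa [C_mul, mul_assoc], by simpa only [C_mul, mul_assoc] using ha⟩

end MvPolynomial

theorem mccoy_mvPolynomial_general {A : Type*} [CommRing A] (n : ℕ)
    (γ : Ideal (MvPolynomial (Fin n) A))
    (f : MvPolynomial (Fin n) A) (hf : f ≠ 0)
    (hfγ : ∀ g ∈ γ, f * g = 0) :
    ∃ a : A, (C a) * f ≠ 0 ∧
      ∀ d : Fin n →₀ ℕ, ∀ g ∈ γ, (C (((C a) * f).coeff d)) * g = 0 :=
  exists_C_mul_ne_zero_and_C_coeff_mul_eq_zero γ hf hfγ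

/-- McCoy-type result for several variables: if f·γ = 0 with f ≠ 0 and γ ≠ 0, then
there is a ∈ A with af ≠ 0 and c(af)·γ = 0. -/
theorem mccoy_mvPolynomial {A : Type*} [CommRing A] (n : ℕ)
    (γ : Ideal (MvPolynomial (Fin n) A)) (hγ : γ ≠ ⊥)
    (f : MvPolynomial (Fin n) A) (hf : f ≠ 0)
    (hfγ : ∀ g ∈ γ, f * g = 0) :
    ∃ a : A, (C a) * f ≠ 0 ∧
      ∀ d : Fin n →₀ ℕ, ∀ g ∈ γ, (C (((C a) * f).coeff d)) * g = 0 :=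
  mccoy_mvPolynomial_general n γ f hf hfγ
end

section
/- For any ideal α of a commutative ring A, one has ω(α[x]) = ω(α[x,y]); that is, the polynomial extension of α to one variable and to two variables have the same absorbing number. -/
open Polynomial

/-- The absorbing number ω(α), as an extended natural number (⊤ if α is n-absorbing
for no n). -/
noncomputable def omega {A : Type*} [CommRing A] (α : Ideal A) : ℕ∞ :=
  sInf ((fun n : ℕ => (n : ℕ∞)) '' {n : ℕ | IsNAbsorbing α n})

/-- Evaluation sends `J[X]` into `J`. -/
lemma eval_mem_of_mem_map_C {R : Type*} [CommRing R] (J : Ideal R) {p : R[X]} (b : R)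
    (hp : p ∈ J.map (C : R →+* R[X])) : p.eval b ∈ J := by
  have h : J.map (C : R →+* R[X]) ≤ J.comap (evalRingHom b) :=
    Ideal.map_le_iff_le_comap.2 fun a ha => by simpa using ha
  simpa using h hp

/-- Kronecker substitution: coefficients of `p.eval (X^N)` recover coefficients of `p`. -/
lemma kron_coeff {R : Type*} [CommRing R] (p : R[X][X]) (N j k : ℕ) (hk : k < N)
    (hd : ∀ i, (p.coeff i).degree < (N : ℕ)) :
    (p.eval (X ^ N)).coeff (N * j + k) = (p.coeff j).coeff k := by
  have hterm : ∀ i, (p.coeff i * (X ^ N) ^ i).coeff (N * j + k)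
      = if N * i ≤ N * j + k then (p.coeff i).coeff (N * j + k - N * i) else 0 := by
    intro i
    rw [← pow_mul, coeff_mul_X_pow']
  have hne : ∀ i, i ≠ j → (p.coeff i * (X ^ N) ^ i).coeff (N * j + k) = 0 := by
    intro i hij
    rw [hterm]
    rcases lt_or_gt_of_ne hij with h | h
    · rw [if_pos]
      · apply coeff_eq_zero_of_degree_lt
        refine lt_of_lt_of_le (hd i) ?_
        have h2 : N ≤ N * j + k - N * i := by
          have h1 : N * (i + 1) ≤ N * j := Nat.mul_le_mul_left N h
          rw [Nat.mul_succ] at h1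
          omega
        exact_mod_cast h2
      · have h3 : N * i ≤ N * j := Nat.mul_le_mul_left N (Nat.le_of_lt h)
        omega
    · rw [if_neg]
      have h1 : N * (j + 1) ≤ N * i := Nat.mul_le_mul_left N h
      rw [Nat.mul_succ] at h1
      omega
  rw [eval_eq_sum_range, finset_sum_coeff]
  rw [Finset.sum_eq_single j (fun i _ hij => hne i hij) ?_]
  · rw [hterm, if_pos (Nat.le_add_right _ _), Nat.add_sub_cancel_left]
  · intro hj
    have h0 : p.coeff j = 0 := by
      apply coeff_eq_zero_of_natDegree_lt
      simpa [Finset.mem_range, Nat.lt_succ_iff, not_le] using hj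
    simp [h0]

lemma mem_map_map_of_eval {A : Type*} [CommRing A] (α : Ideal A) (p : A[X][X]) (N : ℕ)
    (hd : ∀ i, (p.coeff i).degree < (N : ℕ))
    (h : p.eval (X ^ N) ∈ α.map (C : A →+* A[X])) :
    p ∈ (α.map (C : A →+* A[X])).map (C : A[X] →+* A[X][X]) := by
  rw [Ideal.mem_map_C_iff]
  intro i
  rw [Ideal.mem_map_C_iff]
  intro m
  by_cases hm : m < N
  · rw [← kron_coeff p N i m hm hd]
    exact Ideal.mem_map_C_iff.1 h _
  · rw [coeff_eq_zero_of_degree_lt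
      (lt_of_lt_of_le (hd i) (by exact_mod_cast Nat.le_of_not_lt hm))]
    exact α.zero_mem

lemma coeff_prod_degree_le {A : Type*} [CommRing A] {ι : Type*} (s : Finset ι)
    (f : ι → A[X][X]) (d : ι → ℕ)
    (hd : ∀ i j, ((f i).coeff j).degree ≤ ((d i : ℕ) : WithBot ℕ)) :
    ∀ j, ((∏ i ∈ s, f i).coeff j).degree ≤ ((∑ i ∈ s, d i : ℕ) : WithBot ℕ) := by
  induction s using Finset.cons_induction with
  | empty =>
    intro j
    rw [Finset.prod_empty, coeff_one]
    split
    · simp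
    · simp
  | cons a s ha ih =>
    intro j
    rw [Finset.prod_cons, Finset.sum_cons, coeff_mul]
    refine le_trans (degree_sum_le _ _) ?_
    rw [Finset.sup_le_iff]
    rintro ⟨u, v⟩ huv
    refine le_trans (degree_mul_le _ _) ?_
    rw [Nat.cast_add]
    exact add_le_add (hd a u) (ih v)

lemma isNAbsorbing_map_iff {A : Type*} [CommRing A] (α : Ideal A) (n : ℕ) :
    IsNAbsorbing (α.map (C : A →+* A[X])) n ↔
      IsNAbsorbing ((α.map (C : A →+* A[X])).map (C : A[X] →+* A[X][X])) n := by
  constructor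
  · intro h f hf
    set d : Fin (n + 1) → ℕ := fun i =>
      (Finset.range ((f i).natDegree + 1)).sup fun j => ((f i).coeff j).natDegree with hdd
    have hd : ∀ i j, ((f i).coeff j).degree ≤ ((d i : ℕ) : WithBot ℕ) := by
      intro i j
      by_cases hj : j ≤ (f i).natDegree
      · refine le_trans degree_le_natDegree ?_
        have h1 : ((f i).coeff j).natDegree ≤ d i := by
          simp only [hdd]
          exact Finset.le_sup (f := fun j => ((f i).coeff j).natDegree)
            (Finset.mem_range.2 (Nat.lt_succ_of_le hj))
        exact_mod_cast h1
      · rw [coeff_eq_zero_of_natDegree_lt (lt_of_not_ge hj)]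
        simp
    set N : ℕ := (∑ i, d i) + 1 with hNN
    have hN : ∀ (s : Finset (Fin (n + 1))) (j : ℕ),
        ((∏ i ∈ s, f i).coeff j).degree < (N : ℕ) := by
      intro s j
      refine lt_of_le_of_lt (coeff_prod_degree_le s f d hd j) ?_
      have h1 : ∑ i ∈ s, d i ≤ ∑ i, d i :=
        Finset.sum_le_sum_of_subset (Finset.subset_univ s)
      exact_mod_cast Nat.lt_succ_of_le h1
    have hev : (∏ i, (f i).eval (X ^ N)) ∈ α.map (C : A →+* A[X]) := by
      rw [← eval_prod]
      exact eval_mem_of_mem_map_C _ _ hf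
    obtain ⟨j, hj⟩ := h _ hev
    refine ⟨j, ?_⟩
    apply mem_map_map_of_eval α _ N (hN _)
    rw [eval_prod]
    exact hj
  · intro h f hf
    have hf' : (∏ i, (C (f i) : A[X][X])) ∈
        (α.map (C : A →+* A[X])).map (C : A[X] →+* A[X][X]) := by
      rw [← map_prod]
      exact Ideal.mem_map_of_mem _ hf
    obtain ⟨j, hj⟩ := h _ hf'
    refine ⟨j, ?_⟩
    rw [← map_prod] at hj
    have h2 := Ideal.mem_map_C_iff.1 hj 0
    rwa [coeff_C_zero] at h2

/-- ω(α[x]) = ω(α[x,y]) for any ideal α of a commutative ring A. -/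
theorem omega_polynomial_eq_omega_polynomial_two {A : Type*} [CommRing A]
    (α : Ideal A) :
    omega (α.map (C : A →+* A[X])) =
      omega ((α.map (C : A →+* A[X])).map (C : A[X] →+* A[X][X])) := by
  unfold omega
  have hset : {n : ℕ | IsNAbsorbing (α.map (C : A →+* A[X])) n}
      = {n : ℕ | IsNAbsorbing ((α.map (C : A →+* A[X])).map (C : A[X] →+* A[X][X])) n} :=
    Set.ext fun n => isNAbsorbing_map_iff α n
  rw [hset]
end
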